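/- arXiv:2206.04366 — 3 statements merged into one kernel-verified Lean document; each statement's English description precedes it below -/
import Mathlib

section
/- The second-order ODE (1-τ²)ζ'' + 2τ(p-1)ζ' + (p+ℓ)(ℓ-p+1)ζ = 0 with integer parameters p ≥ 1 and 0 ≤ ℓ ≤ p-1 has the two-parameter family of solutions ζ(τ) = A((1-τ)/2)^p P_ℓ^{(p,-p)}(τ) + B((1+τ)/2)^p P_ℓ^{(-p,p)}(τ), where P_ℓ^{(α,β)} are Jacobi polynomials; in particular every such solution is a polynomial in τ. -/
/-! With `x = X - 1` and `y = X + 1` we have `y - x = 2` and `1 - X² = -xy`, and the Jacobi operator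
`J` of degree `n` sends `x^m y^s` (`m + s = n`) to `2s(s+β) x^m y^(s-1) - 2m(m+α) x^(m-1) y^s`.
Hence `J (∑ c_s x^(n-s) y^s)` telescopes to zero as soon as
`(s+1)(s+1+β) c_(s+1) = (n-s)(n-s+α) c_s`, the ratio of consecutive coefficients of `P_n^(α,β)`.
The operator `L` of the equation is conjugate to Jacobi operators:
`L ((1 ∓ X)^p f) = (1 ∓ X)^p J_ℓ^(±p,∓p) f`, so both summands of `ζ` are polynomial solutions. -/

open Finset

/-- Generalized binomial coefficient `C(x, k)` for real `x`. -/
noncomputable def genBinom (x : ℝ) (k : ℕ) : ℝ :=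
  (∏ i ∈ Finset.range k, (x - i)) / (Nat.factorial k)

/-- Jacobi polynomial of degree `n` with parameters `(α, β)`. -/
noncomputable def jacobiP (n : ℕ) (α β : ℝ) (τ : ℝ) : ℝ :=
  ∑ s ∈ Finset.range (n + 1),
    genBinom (n + α) s * genBinom (n + β) (n - s) *
      ((τ - 1) / 2) ^ (n - s) * ((τ + 1) / 2) ^ s

open Polynomial

section JacobiOperator

variable {R : Type*} [CommRing R]

noncomputable def jacobiOp (n : ℕ) (α β : R) : R[X] →ₗ[R] R[X] where
  toFun f := (1 - X ^ 2) * derivative (derivative f)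
    + (C β - C α - (C α + C β + 2) * X) * derivative f
    + (n : R[X]) * ((n : R[X]) + C α + C β + 1) * f
  map_add' f g := by simp only [map_add]; ring
  map_smul' a f := by simp only [smul_eq_C_mul, derivative_C_mul, RingHom.id_apply]; ring

lemma jacobiOp_apply (n : ℕ) (α β : R) (f : R[X]) :
    jacobiOp n α β f = (1 - X ^ 2) * derivative (derivative f)
      + (C β - C α - (C α + C β + 2) * X) * derivative f
      + (n : R[X]) * ((n : R[X]) + C α + C β + 1) * f :=
  rfl

lemma derivative_X_sub_one_pow_mul_X_add_one_pow (m s : ℕ) :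
    derivative ((X - 1 : R[X]) ^ m * (X + 1) ^ s) =
      (m : R[X]) * ((X - 1) ^ (m - 1) * (X + 1) ^ s)
        + (s : R[X]) * ((X - 1) ^ m * (X + 1) ^ (s - 1)) := by
  simp only [derivative_mul, derivative_pow, derivative_sub, derivative_add, derivative_X,
    derivative_one, map_natCast]
  ring

-- `m - 1` and `s - 1` truncate at `0` only where their coefficient `m` resp. `s` vanishes.
lemma jacobiOp_X_sub_one_pow_mul_X_add_one_pow (m s : ℕ) (α β : R) :
    jacobiOp (m + s) α β ((X - 1) ^ m * (X + 1) ^ s) =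
      2 * (s : R[X]) * ((s : R[X]) + C β) * ((X - 1) ^ m * (X + 1) ^ (s - 1))
        - 2 * (m : R[X]) * ((m : R[X]) + C α) * ((X - 1) ^ (m - 1) * (X + 1) ^ s) := by
  simp only [jacobiOp_apply, derivative_X_sub_one_pow_mul_X_add_one_pow, map_add,
    derivative_natCast_mul]
  rcases m with _ | _ | m <;> rcases s with _ | _ | s <;> push_cast [Nat.add_sub_cancel] <;> ring

noncomputable def zetaOp (p ℓ : ℕ) : R[X] →ₗ[R] R[X] where
  toFun f := (1 - X ^ 2) * derivative (derivative f) + 2 * X * ((p : R[X]) - 1) * derivative f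
    + ((p : R[X]) + (ℓ : R[X])) * ((ℓ : R[X]) - (p : R[X]) + 1) * f
  map_add' f g := by simp only [map_add]; ring
  map_smul' a f := by simp only [smul_eq_C_mul, derivative_C_mul, RingHom.id_apply]; ring

lemma zetaOp_apply (p ℓ : ℕ) (f : R[X]) :
    zetaOp p ℓ f = (1 - X ^ 2) * derivative (derivative f) + 2 * X * ((p : R[X]) - 1) * derivative f
      + ((p : R[X]) + (ℓ : R[X])) * ((ℓ : R[X]) - (p : R[X]) + 1) * f :=
  rfl

lemma zetaOp_one_sub_X_pow_mul (p ℓ : ℕ) (f : R[X]) :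
    zetaOp p ℓ ((1 - X) ^ p * f) = (1 - X) ^ p * jacobiOp ℓ (p : R) (-p) f := by
  simp only [zetaOp_apply, jacobiOp_apply, derivative_mul, derivative_pow, derivative_add,
    derivative_sub, derivative_one, derivative_X, map_natCast, map_neg, derivative_natCast,
    derivative_zero, zero_mul, zero_add]
  rcases p with _ | _ | p <;> push_cast [Nat.add_sub_cancel] <;> ring

lemma zetaOp_one_add_X_pow_mul (p ℓ : ℕ) (f : R[X]) :
    zetaOp p ℓ ((1 + X) ^ p * f) = (1 + X) ^ p * jacobiOp ℓ (-p : R) p f := by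
  simp only [zetaOp_apply, jacobiOp_apply, derivative_mul, derivative_pow, derivative_add,
    derivative_one, derivative_X, map_natCast, map_neg, derivative_natCast, zero_mul, zero_add,
    mul_zero]
  rcases p with _ | _ | p <;> push_cast [Nat.add_sub_cancel] <;> ring

lemma jacobiOp_sum_smul_eq_zero (n : ℕ) (α β : R) (c : ℕ → R)
    (hc : ∀ s < n, ((s : R) + 1) * ((s : R) + 1 + β) * c (s + 1)
      = ((n - s : ℕ) : R) * ((n - s : ℕ) + α) * c s) :
    jacobiOp n α β (∑ s ∈ range (n + 1), c s • ((X - 1) ^ (n - s) * (X + 1) ^ s)) = 0 := by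
  set up : ℕ → R[X] := fun s ↦
    c s • (2 * (s : R[X]) * ((s : R[X]) + C β) * ((X - 1) ^ (n - s) * (X + 1) ^ (s - 1)))
  set down : ℕ → R[X] := fun s ↦ c s • (2 * ((n - s : ℕ) : R[X]) * (((n - s : ℕ) : R[X]) + C α)
    * ((X - 1) ^ (n - s - 1) * (X + 1) ^ s))
  have hterm : ∀ s ∈ range (n + 1),
      jacobiOp n α β (c s • ((X - 1) ^ (n - s) * (X + 1) ^ s)) = up s - down s := by
    intro s hs
    have hsn : n - s + s = n := Nat.sub_add_cancel (by simpa [Nat.lt_succ_iff] using hs)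
    have h := jacobiOp_X_sub_one_pow_mul_X_add_one_pow (n - s) s α β
    rw [hsn] at h
    rw [map_smul, h, smul_sub]
  have hshift : ∀ s ∈ range n, up (s + 1) = down s := by
    intro s hs
    have hsn : s < n := mem_range.mp hs
    simp only [up, down, smul_eq_C_mul, Nat.add_sub_cancel, show n - (s + 1) = n - s - 1 by omega]
    have h := congrArg C (hc s hsn)
    simp only [map_mul, map_add, map_natCast, map_one] at h
    push_cast
    linear_combination 2 * ((X - 1) ^ (n - s - 1) * (X + 1) ^ s) * h
  rw [map_sum, sum_congr rfl hterm, sum_sub_distrib, sum_range_succ',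
    sum_range_succ down, sum_congr rfl hshift]
  simp [up, down]

end JacobiOperator

lemma genBinom_succ_mul (x : ℝ) (k : ℕ) :
    genBinom x (k + 1) * (k + 1) = genBinom x k * (x - k) := by
  unfold genBinom
  rw [prod_range_succ, Nat.factorial_succ]
  push_cast
  field_simp

lemma genBinom_mul_genBinom_succ (n s : ℕ) (hs : s < n) (α β : ℝ) :
    ((s : ℝ) + 1) * ((s : ℝ) + 1 + β) * (genBinom (n + α) (s + 1) * genBinom (n + β) (n - (s + 1)))
      = ((n - s : ℕ) : ℝ) * ((n - s : ℕ) + α)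
        * (genBinom (n + α) s * genBinom (n + β) (n - s)) := by
  obtain ⟨k, rfl⟩ : ∃ k, n = s + 1 + k := ⟨n - (s + 1), by omega⟩
  have hα := genBinom_succ_mul (s + 1 + k + α) s
  have hβ := genBinom_succ_mul (s + 1 + k + β) k
  rw [show s + 1 + k - s = k + 1 by omega, show s + 1 + k - (s + 1) = k by omega]
  push_cast at hα hβ ⊢
  linear_combination ((s : ℝ) + 1 + β) * genBinom (s + 1 + k + β) k * hα
    - ((k : ℝ) + 1 + α) * genBinom (s + 1 + k + α) s * hβ

noncomputable def jacobiPoly (n : ℕ) (α β : ℝ) : ℂ[X] :=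
  ∑ s ∈ range (n + 1), ((genBinom (n + α) s * genBinom (n + β) (n - s) : ℝ) : ℂ) •
    ((X - 1) ^ (n - s) * (X + 1) ^ s)

lemma eval_jacobiPoly (n : ℕ) (α β τ : ℝ) :
    (jacobiPoly n α β).eval (τ : ℂ) = 2 ^ n * (jacobiP n α β τ : ℂ) := by
  simp only [jacobiPoly, jacobiP, eval_finsetSum, eval_smul, eval_mul, eval_pow, eval_sub, eval_add,
    eval_X, eval_one, smul_eq_mul, Complex.ofReal_sum, Complex.ofReal_mul, Complex.ofReal_pow,
    Complex.ofReal_div, Complex.ofReal_sub, Complex.ofReal_add, Complex.ofReal_one,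
    Complex.ofReal_ofNat, mul_sum]
  refine sum_congr rfl fun s hs => ?_
  rw [← Nat.sub_add_cancel (mem_range_succ_iff.mp hs), pow_add, div_pow, div_pow,
    Nat.add_sub_cancel]
  field_simp

lemma jacobiOp_jacobiPoly (n : ℕ) (α β : ℝ) : jacobiOp n (α : ℂ) β (jacobiPoly n α β) = 0 := by
  refine jacobiOp_sum_smul_eq_zero n _ _ _ fun s hs => ?_
  exact_mod_cast genBinom_mul_genBinom_succ n s hs α β

lemma deriv_eval_ofReal (q : ℂ[X]) :
    deriv (fun τ : ℝ ↦ q.eval (τ : ℂ)) = fun τ : ℝ ↦ (derivative q).eval (τ : ℂ) :=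
  funext fun τ ↦ (q.hasDerivAt (τ : ℂ)).comp_ofReal.deriv

theorem stmt0_general (p ℓ : ℕ) (A B : ℂ)
    (ζ : ℝ → ℂ)
    (hζ : ∀ τ : ℝ, ζ τ =
      A * (((1 - τ) / 2 : ℝ) : ℂ) ^ p * (jacobiP ℓ (p : ℝ) (-(p : ℝ)) τ : ℂ) +
      B * (((1 + τ) / 2 : ℝ) : ℂ) ^ p * (jacobiP ℓ (-(p : ℝ)) (p : ℝ) τ : ℂ)) :
    (∀ τ : ℝ,
      (1 - (τ : ℂ) ^ 2) * deriv (deriv ζ) τ +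
        2 * (τ : ℂ) * ((p : ℂ) - 1) * deriv ζ τ +
        ((p : ℂ) + (ℓ : ℂ)) * ((ℓ : ℂ) - (p : ℂ) + 1) * ζ τ = 0) ∧
    ∃ q : Polynomial ℂ, ∀ τ : ℝ, ζ τ = q.eval (τ : ℂ) := by
  set q : ℂ[X] := (A / 2 ^ (p + ℓ)) • ((1 - X) ^ p * jacobiPoly ℓ p (-p))
    + (B / 2 ^ (p + ℓ)) • ((1 + X) ^ p * jacobiPoly ℓ (-p) p)
  have hq : ζ = fun τ : ℝ ↦ q.eval (τ : ℂ) := by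
    funext τ
    simp only [hζ τ, q, eval_add, eval_smul, eval_mul, eval_pow, eval_sub, eval_add, eval_one,
      eval_X, eval_jacobiPoly, smul_eq_mul]
    push_cast
    rw [div_pow, div_pow, pow_add]
    field_simp
  have hode : zetaOp p ℓ q = 0 := by
    have h₁ := jacobiOp_jacobiPoly ℓ p (-p)
    have h₂ := jacobiOp_jacobiPoly ℓ (-p) p
    push_cast at h₁ h₂
    simp only [q, map_add, map_smul, zetaOp_one_sub_X_pow_mul, zetaOp_one_add_X_pow_mul, h₁, h₂,
      mul_zero, smul_zero, add_zero]
  refine ⟨fun τ ↦ ?_, q, fun τ ↦ by rw [hq]⟩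
  rw [hq, deriv_eval_ofReal, deriv_eval_ofReal]
  simpa [zetaOp_apply] using congrArg (eval (τ : ℂ)) hode

/-- for integers `p ≥ 1`, `0 ≤ ℓ ≤ p-1`, the function
`ζ(τ) = A ((1-τ)/2)^p P_ℓ^{(p,-p)}(τ) + B ((1+τ)/2)^p P_ℓ^{(-p,p)}(τ)` solves
`(1-τ²)ζ'' + 2τ(p-1)ζ' + (p+ℓ)(ℓ-p+1)ζ = 0`, and it is a polynomial in `τ`. -/
theorem stmt0 (p ℓ : ℕ) (hp : 1 ≤ p) (hℓ : ℓ + 1 ≤ p) (A B : ℂ)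
    (ζ : ℝ → ℂ)
    (hζ : ∀ τ : ℝ, ζ τ =
      A * (((1 - τ) / 2 : ℝ) : ℂ) ^ p * (jacobiP ℓ (p : ℝ) (-(p : ℝ)) τ : ℂ) +
      B * (((1 + τ) / 2 : ℝ) : ℂ) ^ p * (jacobiP ℓ (-(p : ℝ)) (p : ℝ) τ : ℂ)) :
    (∀ τ : ℝ,
      (1 - (τ : ℂ) ^ 2) * deriv (deriv ζ) τ +
        2 * (τ : ℂ) * ((p : ℂ) - 1) * deriv ζ τ +
        ((p : ℂ) + (ℓ : ℂ)) * ((ℓ : ℂ) - (p : ℂ) + 1) * ζ τ = 0) ∧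
    ∃ q : Polynomial ℂ, ∀ τ : ℝ, ζ τ = q.eval (τ : ℂ) :=
  stmt0_general p ℓ A B ζ hζ
end

section
/- For ℓ = p, the general solution of the ODE (1-τ²)ζ'' + 2τ(p-1)ζ' + 2p·ζ = 0 (i.e. the coefficient (p+ℓ)(ℓ-p+1) with ℓ = p) on the interval (-1,1) is ζ(τ) = ((1-τ)/2)^p ((1+τ)/2)^p (C₁ + C₂ ∫₀^τ ds/(1-s²)^{p+1}) for constants C₁, C₂. -/
/-!
The polynomial `w(τ) = ((1 - τ²)/4)^p` satisfies the first-order equation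
`(1 - τ²) w' = -2pτ w`; differentiating it shows that `w` solves the equation. Writing
`ζ = w u` (reduction of order), the equation becomes `w ((1 - τ²) u'' - 2(p + 1)τ u') = 0`,
i.e. `((1 - τ²)^(p + 1) u')' = 0` since `w` does not vanish on `(-1, 1)`. Integrating twice
gives `u = C₁ + C₂ ∫₀^τ ds / (1 - s²)^(p + 1)`.
-/

open Set intervalIntegral
open scoped ContDiff

section ProductRule

variable {𝕜 𝔸 : Type*} [NontriviallyNormedField 𝕜] [NormedCommRing 𝔸] [NormedAlgebra 𝕜 𝔸]
  {s : Set 𝕜} {w u ζ : 𝕜 → 𝔸}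

theorem deriv_eq_of_eqOn_mul (hs : IsOpen s) (hw : DifferentiableOn 𝕜 w s)
    (hu : DifferentiableOn 𝕜 u s) (h : EqOn ζ (w * u) s) {x : 𝕜} (hx : x ∈ s) :
    deriv ζ x = deriv w x * u x + w x * deriv u x := by
  rw [(h.eventuallyEq_of_mem (hs.mem_nhds hx)).deriv_eq,
    deriv_mul ((hw x hx).differentiableAt (hs.mem_nhds hx))
      ((hu x hx).differentiableAt (hs.mem_nhds hx))]

theorem deriv_deriv_eq_of_eqOn_mul (hs : IsOpen s) (hw : ContDiffOn 𝕜 2 w s)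
    (hu : ContDiffOn 𝕜 2 u s) (h : EqOn ζ (w * u) s) {x : 𝕜} (hx : x ∈ s) :
    deriv (deriv ζ) x =
      deriv (deriv w) x * u x + 2 * deriv w x * deriv u x + w x * deriv (deriv u) x := by
  have hw' := (hw.deriv_of_isOpen hs (m := 1) (by norm_num)).differentiableOn one_ne_zero
  have hu' := (hu.deriv_of_isOpen hs (m := 1) (by norm_num)).differentiableOn one_ne_zero
  have hw1 := hw.differentiableOn two_ne_zero
  have hu1 := hu.differentiableOn two_ne_zero
  have hζ' : EqOn (deriv ζ) (deriv w * u + w * deriv u) s := fun y hy =>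
    deriv_eq_of_eqOn_mul hs hw1 hu1 h hy
  have hd : ∀ {f : 𝕜 → 𝔸}, DifferentiableOn 𝕜 f s → DifferentiableAt 𝕜 f x :=
    fun hf => (hf x hx).differentiableAt (hs.mem_nhds hx)
  rw [(hζ'.eventuallyEq_of_mem (hs.mem_nhds hx)).deriv_eq,
    deriv_add ((hd hw').mul (hd hu1)) ((hd hw1).mul (hd hu')), deriv_mul (hd hw') (hd hu1),
    deriv_mul (hd hw1) (hd hu')]
  ring

end ProductRule

theorem IsOpen.forall_deriv_eq_zero_iff {𝕜 G : Type*} [RCLike 𝕜] [NormedAddCommGroup G]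
    [NormedSpace 𝕜 G] {s : Set 𝕜} {f : 𝕜 → G} (hs : IsOpen s) (hs' : IsPreconnected s)
    (hf : DifferentiableOn 𝕜 f s) :
    (∀ x ∈ s, deriv f x = 0) ↔ ∃ a, ∀ x ∈ s, f x = a := by
  refine ⟨fun h => hs.exists_is_const_of_deriv_eq_zero hs' hf h, fun ⟨a, ha⟩ x hx => ?_⟩
  rw [(EqOn.eventuallyEq_of_mem ha (hs.mem_nhds hx)).deriv_eq, deriv_const]

namespace LegendreTypeODE

theorem one_sub_sq_pos {τ : ℝ} (hτ : τ ∈ Ioo (-1 : ℝ) 1) : 0 < 1 - τ ^ 2 := by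
  nlinarith [hτ.1, hτ.2]

theorem one_sub_sq_ne_zero {τ : ℝ} (hτ : τ ∈ Ioo (-1 : ℝ) 1) :
    (1 : ℂ) - (τ : ℂ) ^ 2 ≠ 0 := by
  exact_mod_cast (one_sub_sq_pos hτ).ne'

theorem hasDerivAt_one_sub_sq (τ : ℝ) :
    HasDerivAt (fun τ : ℝ => 1 - (τ : ℂ) ^ 2) (-2 * τ : ℂ) τ := by
  simpa [mul_comm] using ((hasDerivAt_id τ).ofReal_comp.pow 2).const_sub 1

noncomputable def weight (p : ℕ) (τ : ℝ) : ℂ := ((1 - (τ : ℂ) ^ 2) / 4) ^ p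

theorem contDiff_weight {n : WithTop ℕ∞} (p : ℕ) : ContDiff ℝ n (weight p) := by
  have : ContDiff ℝ n (fun τ : ℝ => (τ : ℂ)) := Complex.ofRealCLM.contDiff
  unfold weight
  fun_prop

theorem weight_ne_zero (p : ℕ) {τ : ℝ} (hτ : τ ∈ Ioo (-1 : ℝ) 1) : weight p τ ≠ 0 :=
  pow_ne_zero _ (div_ne_zero (one_sub_sq_ne_zero hτ) (by norm_num))

theorem weight_eq_ofReal (p : ℕ) (τ : ℝ) :
    weight p τ = ((((1 - τ) / 2) ^ p * ((1 + τ) / 2) ^ p : ℝ) : ℂ) := by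
  rw [weight, ← mul_pow]
  push_cast
  ring

theorem hasDerivAt_weight (p : ℕ) (τ : ℝ) :
    HasDerivAt (weight p) (p * ((1 - (τ : ℂ) ^ 2) / 4) ^ (p - 1) * (-2 * τ / 4)) τ :=
  ((hasDerivAt_one_sub_sq τ).div_const 4).fun_pow p

theorem one_sub_sq_mul_deriv_weight (p : ℕ) (τ : ℝ) :
    (1 - (τ : ℂ) ^ 2) * deriv (weight p) τ = -2 * p * τ * weight p τ := by
  rw [(hasDerivAt_weight p τ).deriv, weight]
  cases p with
  | zero => simp
  | succ n => push_cast; ring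

theorem one_sub_sq_mul_deriv_deriv_weight (p : ℕ) (τ : ℝ) :
    (1 - (τ : ℂ) ^ 2) * deriv (deriv (weight p)) τ =
      -2 * p * weight p τ - 2 * τ * (p - 1) * deriv (weight p) τ := by
  have hw := ((contDiff_weight (n := 1) p).differentiable one_ne_zero τ).hasDerivAt
  have hw' :=
    (((contDiff_weight (n := ∞) p).iterate_deriv 1).differentiable (by simp) τ).hasDerivAt
  have lhs := (hasDerivAt_one_sub_sq τ).fun_mul hw'
  rw [Function.iterate_one, funext (one_sub_sq_mul_deriv_weight p)] at lhs
  have rhs := ((hasDerivAt_id τ).ofReal_comp.const_mul (-2 * p : ℂ)).fun_mul hw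
  simp only [id, Complex.ofReal_one] at rhs
  linear_combination lhs.unique rhs

theorem ode_eq_weight_mul (p : ℕ) {ζ u : ℝ → ℂ} (hu : ContDiffOn ℝ 2 u (Ioo (-1) 1))
    (hζ : EqOn ζ (weight p * u) (Ioo (-1) 1)) {τ : ℝ} (hτ : τ ∈ Ioo (-1 : ℝ) 1) :
    (1 - (τ : ℂ) ^ 2) * deriv (deriv ζ) τ + 2 * τ * (p - 1) * deriv ζ τ + 2 * p * ζ τ =
      weight p τ *
        ((1 - (τ : ℂ) ^ 2) * deriv (deriv u) τ - 2 * (p + 1) * τ * deriv u τ) := by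
  have hw : ContDiffOn ℝ 2 (weight p) (Ioo (-1) 1) := (contDiff_weight p).contDiffOn
  rw [deriv_deriv_eq_of_eqOn_mul isOpen_Ioo hw hu hζ hτ,
    deriv_eq_of_eqOn_mul isOpen_Ioo (hw.differentiableOn two_ne_zero)
      (hu.differentiableOn two_ne_zero) hζ hτ, hζ hτ, Pi.mul_apply]
  linear_combination u τ * one_sub_sq_mul_deriv_deriv_weight p τ +
    2 * deriv u τ * one_sub_sq_mul_deriv_weight p τ

noncomputable def invOneSubSqPowIntegral (p : ℕ) (τ : ℝ) : ℝ :=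
  ∫ s in (0 : ℝ)..τ, 1 / (1 - s ^ 2) ^ (p + 1)

theorem hasDerivAt_invOneSubSqPowIntegral (p : ℕ) {τ : ℝ} (hτ : τ ∈ Ioo (-1 : ℝ) 1) :
    HasDerivAt (fun τ => (invOneSubSqPowIntegral p τ : ℂ))
      (1 / (1 - (τ : ℂ) ^ 2) ^ (p + 1)) τ := by
  have hcont : ContinuousOn (fun s : ℝ => 1 / (1 - s ^ 2) ^ (p + 1)) (Ioo (-1) 1) :=
    continuousOn_const.div (by fun_prop) fun s hs => pow_ne_zero _ (one_sub_sq_pos hs).ne'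
  have hint :
      IntervalIntegrable (fun s : ℝ => 1 / (1 - s ^ 2) ^ (p + 1)) MeasureTheory.volume 0 τ :=
    (hcont.mono (ordConnected_Ioo.uIcc_subset (by norm_num) hτ)).intervalIntegrable
  exact_mod_cast (integral_hasDerivAt_right hint
    (hcont.stronglyMeasurableAtFilter isOpen_Ioo τ hτ)
    (hcont.continuousAt (isOpen_Ioo.mem_nhds hτ))).ofReal_comp

theorem hasDerivAt_one_sub_sq_pow_mul_deriv (p : ℕ) {u : ℝ → ℂ}
    (hu : ContDiffOn ℝ 2 u (Ioo (-1) 1)) {τ : ℝ} (hτ : τ ∈ Ioo (-1 : ℝ) 1) :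
    HasDerivAt (fun τ : ℝ => (1 - (τ : ℂ) ^ 2) ^ (p + 1) * deriv u τ)
      ((1 - (τ : ℂ) ^ 2) ^ p *
        ((1 - (τ : ℂ) ^ 2) * deriv (deriv u) τ - 2 * (p + 1) * τ * deriv u τ)) τ := by
  have hu' : DifferentiableAt ℝ (deriv u) τ :=
    ((hu.deriv_of_isOpen isOpen_Ioo (m := 1) (by norm_num)).differentiableOn one_ne_zero τ
      hτ).differentiableAt (isOpen_Ioo.mem_nhds hτ)
  refine (((hasDerivAt_one_sub_sq τ).fun_pow (p + 1)).fun_mul hu'.hasDerivAt).congr_deriv ?_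
  rw [Nat.add_sub_cancel]
  push_cast
  ring

theorem reduced_ode_iff_exists_one_sub_sq_pow_mul_deriv_eq (p : ℕ) {u : ℝ → ℂ}
    (hu : ContDiffOn ℝ 2 u (Ioo (-1) 1)) :
    (∀ τ ∈ Ioo (-1 : ℝ) 1,
      (1 - (τ : ℂ) ^ 2) * deriv (deriv u) τ - 2 * (p + 1) * τ * deriv u τ = 0) ↔
    ∃ C : ℂ, ∀ τ ∈ Ioo (-1 : ℝ) 1, (1 - (τ : ℂ) ^ 2) ^ (p + 1) * deriv u τ = C := by
  have hflux := fun τ (hτ : τ ∈ Ioo (-1 : ℝ) 1) =>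
    hasDerivAt_one_sub_sq_pow_mul_deriv p hu hτ
  calc _ ↔ ∀ τ ∈ Ioo (-1 : ℝ) 1,
        deriv (fun τ : ℝ => (1 - (τ : ℂ) ^ 2) ^ (p + 1) * deriv u τ) τ = 0 :=
        forall₂_congr fun τ hτ => by
          rw [(hflux τ hτ).deriv, mul_eq_zero,
            or_iff_right (pow_ne_zero _ (one_sub_sq_ne_zero hτ))]
    _ ↔ _ := isOpen_Ioo.forall_deriv_eq_zero_iff isPreconnected_Ioo fun τ hτ =>
        (hflux τ hτ).differentiableAt.differentiableWithinAt

theorem exists_one_sub_sq_pow_mul_deriv_eq_iff (p : ℕ) {u : ℝ → ℂ}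
    (hu : DifferentiableOn ℝ u (Ioo (-1) 1)) :
    (∃ C : ℂ, ∀ τ ∈ Ioo (-1 : ℝ) 1, (1 - (τ : ℂ) ^ 2) ^ (p + 1) * deriv u τ = C) ↔
    ∃ C₁ C₂ : ℂ, ∀ τ ∈ Ioo (-1 : ℝ) 1,
      u τ = C₁ + C₂ * invOneSubSqPowIntegral p τ := by
  have hF := fun (C : ℂ) τ (hτ : τ ∈ Ioo (-1 : ℝ) 1) =>
    (hasDerivAt_invOneSubSqPowIntegral p hτ).const_mul C
  calc _ ↔ ∃ C₂ : ℂ, ∀ τ ∈ Ioo (-1 : ℝ) 1,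
        deriv (fun τ => u τ - C₂ * invOneSubSqPowIntegral p τ) τ = 0 :=
        exists_congr fun C₂ => forall₂_congr fun τ hτ => by
          rw [deriv_fun_sub ((hu τ hτ).differentiableAt (isOpen_Ioo.mem_nhds hτ))
              (hF C₂ τ hτ).differentiableAt, (hF C₂ τ hτ).deriv, sub_eq_zero, mul_one_div,
            eq_div_iff (pow_ne_zero _ (one_sub_sq_ne_zero hτ)), mul_comm]
    _ ↔ ∃ C₂ C₁ : ℂ, ∀ τ ∈ Ioo (-1 : ℝ) 1,
        u τ - C₂ * invOneSubSqPowIntegral p τ = C₁ :=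
        exists_congr fun C₂ => isOpen_Ioo.forall_deriv_eq_zero_iff isPreconnected_Ioo
          (hu.sub fun τ hτ => (hF C₂ τ hτ).differentiableAt.differentiableWithinAt)
    _ ↔ _ := by
        rw [exists_comm]
        simp only [sub_eq_iff_eq_add]

end LegendreTypeODE

open LegendreTypeODE

theorem stmt1_general (p : ℕ) (ζ : ℝ → ℂ)
    (hreg : ∀ τ ∈ Set.Ioo (-1 : ℝ) 1, ContDiffAt ℝ 2 ζ τ) :
    (∀ τ ∈ Set.Ioo (-1 : ℝ) 1,
      (1 - (τ : ℂ) ^ 2) * deriv (deriv ζ) τ +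
        2 * (τ : ℂ) * ((p : ℂ) - 1) * deriv ζ τ + 2 * (p : ℂ) * ζ τ = 0) ↔
    ∃ C₁ C₂ : ℂ, ∀ τ ∈ Set.Ioo (-1 : ℝ) 1,
      ζ τ = ((((1 - τ) / 2) ^ p * ((1 + τ) / 2) ^ p : ℝ) : ℂ) *
        (C₁ + C₂ * ((∫ s in (0 : ℝ)..τ, 1 / (1 - s ^ 2) ^ (p + 1) : ℝ) : ℂ)) := by
  have hζ2 : ContDiffOn ℝ 2 ζ (Ioo (-1) 1) := fun τ hτ => (hreg τ hτ).contDiffWithinAt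
  have hu : ContDiffOn ℝ 2 (ζ / weight p) (Ioo (-1) 1) := by
    rw [div_eq_mul_inv]
    exact hζ2.mul ((contDiff_weight p).contDiffOn.inv fun τ hτ => weight_ne_zero p hτ)
  have hζ : EqOn ζ (weight p * (ζ / weight p)) (Ioo (-1) 1) := fun τ hτ => by
    rw [Pi.mul_apply, Pi.div_apply, mul_div_cancel₀ _ (weight_ne_zero p hτ)]
  calc _ ↔ ∀ τ ∈ Ioo (-1 : ℝ) 1, (1 - (τ : ℂ) ^ 2) * deriv (deriv (ζ / weight p)) τ -
          2 * (p + 1) * τ * deriv (ζ / weight p) τ = 0 :=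
        forall₂_congr fun τ hτ => by
          rw [ode_eq_weight_mul p hu hζ hτ, mul_eq_zero, or_iff_right (weight_ne_zero p hτ)]
    _ ↔ ∃ C : ℂ, ∀ τ ∈ Ioo (-1 : ℝ) 1,
        (1 - (τ : ℂ) ^ 2) ^ (p + 1) * deriv (ζ / weight p) τ = C :=
        reduced_ode_iff_exists_one_sub_sq_pow_mul_deriv_eq p hu
    _ ↔ ∃ C₁ C₂ : ℂ, ∀ τ ∈ Ioo (-1 : ℝ) 1,
        (ζ / weight p) τ = C₁ + C₂ * invOneSubSqPowIntegral p τ :=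
        exists_one_sub_sq_pow_mul_deriv_eq_iff p (hu.differentiableOn two_ne_zero)
    _ ↔ _ := exists₂_congr fun C₁ C₂ => forall₂_congr fun τ hτ => by
        rw [Pi.div_apply, div_eq_iff (weight_ne_zero p hτ), weight_eq_ofReal, mul_comm]
        rfl

/-- for `ℓ = p ≥ 1`, a (twice differentiable) function on `(-1,1)`
solves `(1-τ²)ζ'' + 2τ(p-1)ζ' + 2pζ = 0` if and only if it has the form
`ζ(τ) = ((1-τ)/2)^p ((1+τ)/2)^p (C₁ + C₂ ∫₀^τ ds/(1-s²)^{p+1})`. -/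
theorem stmt1 (p : ℕ) (hp : 1 ≤ p) (ζ : ℝ → ℂ)
    (hreg : ∀ τ ∈ Set.Ioo (-1 : ℝ) 1, ContDiffAt ℝ 2 ζ τ) :
    (∀ τ ∈ Set.Ioo (-1 : ℝ) 1,
      (1 - (τ : ℂ) ^ 2) * deriv (deriv ζ) τ +
        2 * (τ : ℂ) * ((p : ℂ) - 1) * deriv ζ τ + 2 * (p : ℂ) * ζ τ = 0) ↔
    ∃ C₁ C₂ : ℂ, ∀ τ ∈ Set.Ioo (-1 : ℝ) 1,
      ζ τ = ((((1 - τ) / 2) ^ p * ((1 + τ) / 2) ^ p : ℝ) : ℂ) *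
        (C₁ + C₂ * ((∫ s in (0 : ℝ)..τ, 1 / (1 - s ^ 2) ^ (p + 1) : ℝ) : ℂ)) :=
  stmt1_general p ζ hreg
end

section
/- For ℓ = p ≥ 1, the general solution of (1-τ²)ζ'' + 2((p-1)τ + 1)ζ' + 2p·ζ = 0 on (-1,1) is ζ(τ) = ((1-τ)/2)^{p+1} ((1+τ)/2)^{p-1} (C₃ + C₄ ∫₀^τ ds/((1-s)^{p+2}(1+s)^p)) for constants C₃, C₄. -/
/-!
The function `W τ = ((1-τ)/2)^(p+1) ((1+τ)/2)^(p-1)` solves the equation: its logarithmic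
derivative `r = -(p+1)/(1-τ) + (p-1)/(1+τ)` satisfies the associated Riccati equation.
Everything else is reduction of order. Write the equation as `a ζ'' + b ζ' + c ζ = 0`. By Abel's
identity the Wronskian `ζ' W - ζ W'` of a solution `ζ` with `W` satisfies `a w' + b w = 0`,
as does `W² μ` with `μ s = 1/((1-s)^(p+2) (1+s)^p)`, since `-b/a = -p/(1-τ) + (p-2)/(1+τ)`
is the logarithmic derivative of both. Hence `(ζ/W)' = (ζ' W - ζ W')/W²` is a constant multiple
of `μ`, so `ζ/W = C₃ + C₄ ∫₀^τ μ`. Conversely, `W ∫ μ` is a solution for the same reason.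
-/

open Set intervalIntegral

theorem IsOpen.eq_of_hasDerivAt_eq_zero {E : Type*} [NormedAddCommGroup E] [NormedSpace ℝ E]
    {U : Set ℝ} (hU : IsOpen U) (hU' : IsPreconnected U) {f : ℝ → E}
    (hf : ∀ x ∈ U, HasDerivAt f 0 x) {x y : ℝ} (hx : x ∈ U) (hy : y ∈ U) : f x = f y :=
  hU.is_const_of_deriv_eq_zero hU' (fun z hz => (hf z hz).differentiableAt.differentiableWithinAt)
    (fun z hz => (hf z hz).deriv) hx hy

theorem IsOpen.hasDerivAt_integral_of_continuousOn {E : Type*} [NormedAddCommGroup E]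
    [NormedSpace ℝ E] [CompleteSpace E] {U : Set ℝ} (hU : IsOpen U) (hU' : IsPreconnected U)
    {f : ℝ → E} (hf : ContinuousOn f U) {x₀ x : ℝ} (hx₀ : x₀ ∈ U) (hx : x ∈ U) :
    HasDerivAt (fun y => ∫ t in x₀..y, f t) (f x) x :=
  integral_hasDerivAt_right ((hf.mono (hU'.ordConnected.uIcc_subset hx₀ hx)).intervalIntegrable)
    (hf.stronglyMeasurableAtFilter hU x hx) (hf.continuousAt (hU.mem_nhds hx))

theorem HasDerivAt.fun_pow_mul_logDeriv {𝕜 𝔸 : Type*} [NontriviallyNormedField 𝕜]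
    [NormedCommRing 𝔸] [NormedAlgebra 𝕜 𝔸] {f : 𝕜 → 𝔸} {x : 𝕜} {l : 𝔸}
    (hf : HasDerivAt f (f x * l) x) (n : ℕ) :
    HasDerivAt (fun y => f y ^ n) (f x ^ n * (n * l)) x := by
  refine (hf.fun_pow n).congr_deriv ?_
  cases n with
  | zero => simp
  | succ n => push_cast; ring

section ReductionOfOrder

variable {𝕜 : Type*} [RCLike 𝕜] {a b c y y' y'' y₁ y₁' y₁'' m m' : ℝ → 𝕜} {x x₀ : ℝ}
  {U : Set ℝ}

theorem hasDerivAt_wronskian_div_eq_zero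
    (hy : HasDerivAt y (y' x) x) (hy' : HasDerivAt y' (y'' x) x)
    (hy₁ : HasDerivAt y₁ (y₁' x) x) (hy₁' : HasDerivAt y₁' (y₁'' x) x)
    (hm : HasDerivAt m (m' x) x) (ha : a x ≠ 0) (hy₁0 : y₁ x ≠ 0) (hm0 : m x ≠ 0)
    (hLy : a x * y'' x + b x * y' x + c x * y x = 0)
    (hLy₁ : a x * y₁'' x + b x * y₁' x + c x * y₁ x = 0)
    (hLm : a x * (2 * y₁' x * m x + y₁ x * m' x) + b x * y₁ x * m x = 0) :
    HasDerivAt (fun x => (y' x * y₁ x - y x * y₁' x) / (y₁ x ^ 2 * m x)) 0 x := by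
  have hD : y₁ x ^ 2 * m x ≠ 0 := mul_ne_zero (pow_ne_zero 2 hy₁0) hm0
  convert ((hy'.fun_mul hy₁).fun_sub (hy.fun_mul hy₁')).fun_div ((hy₁.fun_pow 2).fun_mul hm) hD
    using 1
  rw [eq_comm, div_eq_zero_iff]
  left
  refine mul_left_cancel₀ ha ?_
  rw [mul_zero]
  linear_combination (y₁ x ^ 2 * m x) * (y₁ x * hLy - y x * hLy₁)
    - (y' x * y₁ x - y x * y₁' x) * y₁ x * hLm

theorem exists_eq_mul_add_integral_of_ode (hU : IsOpen U) (hU' : IsPreconnected U)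
    (hx₀ : x₀ ∈ U) (ha : ∀ x ∈ U, a x ≠ 0) (hy₁0 : ∀ x ∈ U, y₁ x ≠ 0) (hm0 : ∀ x ∈ U, m x ≠ 0)
    (hy₁ : ∀ x ∈ U, HasDerivAt y₁ (y₁' x) x) (hy₁' : ∀ x ∈ U, HasDerivAt y₁' (y₁'' x) x)
    (hm : ∀ x ∈ U, HasDerivAt m (m' x) x)
    (hLy₁ : ∀ x ∈ U, a x * y₁'' x + b x * y₁' x + c x * y₁ x = 0)
    (hLm : ∀ x ∈ U, a x * (2 * y₁' x * m x + y₁ x * m' x) + b x * y₁ x * m x = 0)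
    (hy : ∀ x ∈ U, ContDiffAt ℝ 2 y x)
    (hLy : ∀ x ∈ U, a x * deriv (deriv y) x + b x * deriv y x + c x * y x = 0) :
    ∃ C₃ C₄ : 𝕜, ∀ x ∈ U, y x = y₁ x * (C₃ + C₄ * ∫ t in x₀..x, m t) := by
  have hy1 (x) (hx : x ∈ U) : HasDerivAt y (deriv y x) x :=
    ((hy x hx).differentiableAt two_ne_zero).hasDerivAt
  have hy2 (x) (hx : x ∈ U) : HasDerivAt (deriv y) (deriv (deriv y) x) x :=
    (((hy x hx).derivWithin (m := 1) le_rfl).differentiableAt one_ne_zero).hasDerivAt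
  have hI (x) (hx : x ∈ U) : HasDerivAt (fun x => ∫ t in x₀..x, m t) (m x) x :=
    hU.hasDerivAt_integral_of_continuousOn hU'
      (fun z hz => (hm z hz).continuousAt.continuousWithinAt) hx₀ hx
  set K := (deriv y x₀ * y₁ x₀ - y x₀ * y₁' x₀) / (y₁ x₀ ^ 2 * m x₀)
  have hK (x) (hx : x ∈ U) : deriv y x * y₁ x - y x * y₁' x = K * (y₁ x ^ 2 * m x) := by
    rw [← div_eq_iff (mul_ne_zero (pow_ne_zero 2 (hy₁0 x hx)) (hm0 x hx))]
    exact hU.eq_of_hasDerivAt_eq_zero hU' (fun z hz => hasDerivAt_wronskian_div_eq_zero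
      (hy1 z hz) (hy2 z hz) (hy₁ z hz) (hy₁' z hz) (hm z hz) (ha z hz) (hy₁0 z hz) (hm0 z hz)
      (hLy z hz) (hLy₁ z hz) (hLm z hz)) hx hx₀
  have hq (x) (hx : x ∈ U) :
      HasDerivAt (fun x => y x / y₁ x - K * ∫ t in x₀..x, m t) 0 x := by
    refine (((hy1 x hx).fun_div (hy₁ x hx) (hy₁0 x hx)).fun_sub
      ((hI x hx).const_mul K)).congr_deriv ?_
    rw [hK x hx]
    field_simp [hy₁0 x hx]
    ring
  refine ⟨y x₀ / y₁ x₀, K, fun x hx => ?_⟩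
  have hconst := hU.eq_of_hasDerivAt_eq_zero hU' hq hx hx₀
  rw [integral_same, mul_zero, sub_zero, sub_eq_iff_eq_add] at hconst
  rw [← hconst]
  field_simp [hy₁0 x hx]

theorem ode_of_eq_mul_add_integral (hU : IsOpen U) (hU' : IsPreconnected U) (hx₀ : x₀ ∈ U)
    (hy₁ : ∀ x ∈ U, HasDerivAt y₁ (y₁' x) x) (hy₁' : ∀ x ∈ U, HasDerivAt y₁' (y₁'' x) x)
    (hm : ∀ x ∈ U, HasDerivAt m (m' x) x)
    (hLy₁ : ∀ x ∈ U, a x * y₁'' x + b x * y₁' x + c x * y₁ x = 0)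
    (hLm : ∀ x ∈ U, a x * (2 * y₁' x * m x + y₁ x * m' x) + b x * y₁ x * m x = 0)
    {C₃ C₄ : 𝕜} (hy : ∀ x ∈ U, y x = y₁ x * (C₃ + C₄ * ∫ t in x₀..x, m t)) :
    ∀ x ∈ U, a x * deriv (deriv y) x + b x * deriv y x + c x * y x = 0 := by
  set v := fun x => C₃ + C₄ * ∫ t in x₀..x, m t
  have hv (x) (hx : x ∈ U) : HasDerivAt v (C₄ * m x) x :=
    ((hU.hasDerivAt_integral_of_continuousOn hU'
      (fun z hz => (hm z hz).continuousAt.continuousWithinAt) hx₀ hx).const_mul C₄).const_add C₃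
  have hy1 : EqOn (deriv y) (fun x => y₁' x * v x + y₁ x * (C₄ * m x)) U := fun x hx => by
    rw [(show EqOn y (fun x => y₁ x * v x) U from hy).deriv hU hx]
    exact ((hy₁ x hx).fun_mul (hv x hx)).deriv
  have hy2 : EqOn (deriv (deriv y)) (fun x => y₁'' x * v x + y₁' x * (C₄ * m x)
      + (y₁' x * (C₄ * m x) + y₁ x * (C₄ * m' x))) U := fun x hx => by
    rw [hy1.deriv hU hx]
    exact (((hy₁' x hx).fun_mul (hv x hx)).fun_add
      ((hy₁ x hx).fun_mul ((hm x hx).const_mul C₄))).deriv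
  intro x hx
  rw [hy2 hx, hy1 hx, hy x hx]
  linear_combination v x * hLy₁ x hx + C₄ * hLm x hx

theorem ode_iff_exists_eq_mul_add_integral (hU : IsOpen U) (hU' : IsPreconnected U)
    (hx₀ : x₀ ∈ U) (ha : ∀ x ∈ U, a x ≠ 0) (hy₁0 : ∀ x ∈ U, y₁ x ≠ 0) (hm0 : ∀ x ∈ U, m x ≠ 0)
    (hy₁ : ∀ x ∈ U, HasDerivAt y₁ (y₁' x) x) (hy₁' : ∀ x ∈ U, HasDerivAt y₁' (y₁'' x) x)
    (hm : ∀ x ∈ U, HasDerivAt m (m' x) x)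
    (hLy₁ : ∀ x ∈ U, a x * y₁'' x + b x * y₁' x + c x * y₁ x = 0)
    (hLm : ∀ x ∈ U, a x * (2 * y₁' x * m x + y₁ x * m' x) + b x * y₁ x * m x = 0)
    (hy : ∀ x ∈ U, ContDiffAt ℝ 2 y x) :
    (∀ x ∈ U, a x * deriv (deriv y) x + b x * deriv y x + c x * y x = 0) ↔
      ∃ C₃ C₄ : 𝕜, ∀ x ∈ U, y x = y₁ x * (C₃ + C₄ * ∫ t in x₀..x, m t) :=
  ⟨exists_eq_mul_add_integral_of_ode hU hU' hx₀ ha hy₁0 hm0 hy₁ hy₁' hm hLy₁ hLm hy,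
    fun ⟨_, _, h⟩ => ode_of_eq_mul_add_integral hU hU' hx₀ hy₁ hy₁' hm hLy₁ hLm h⟩

end ReductionOfOrder

namespace HarmonicTransport

noncomputable def firstSolution (p : ℕ) (τ : ℝ) : ℝ :=
  ((1 - τ) / 2) ^ (p + 1) * ((1 + τ) / 2) ^ (p - 1)

noncomputable def firstSolutionLogDeriv (p : ℕ) (τ : ℝ) : ℝ :=
  -((p + 1 : ℕ) : ℝ) / (1 - τ) + ((p - 1 : ℕ) : ℝ) / (1 + τ)

noncomputable def reductionDensity (p : ℕ) (τ : ℝ) : ℝ :=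
  1 / ((1 - τ) ^ (p + 2) * (1 + τ) ^ p)

noncomputable def reductionDensityLogDeriv (p : ℕ) (τ : ℝ) : ℝ :=
  ((p + 2 : ℕ) : ℝ) / (1 - τ) - p / (1 + τ)

variable {p : ℕ} {τ : ℝ}

theorem firstSolution_pos (h₁ : 0 < 1 - τ) (h₂ : 0 < 1 + τ) : 0 < firstSolution p τ := by
  unfold firstSolution
  positivity

theorem reductionDensity_pos (h₁ : 0 < 1 - τ) (h₂ : 0 < 1 + τ) : 0 < reductionDensity p τ := by
  unfold reductionDensity
  positivity

theorem hasDerivAt_firstSolution (h₁ : 1 - τ ≠ 0) (h₂ : 1 + τ ≠ 0) :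
    HasDerivAt (firstSolution p) (firstSolution p τ * firstSolutionLogDeriv p τ) τ := by
  have hA : HasDerivAt (fun τ : ℝ => (1 - τ) / 2) ((1 - τ) / 2 * (-1 / (1 - τ))) τ :=
    (((hasDerivAt_id τ).const_sub 1).div_const 2).congr_deriv (by field_simp)
  have hB : HasDerivAt (fun τ : ℝ => (1 + τ) / 2) ((1 + τ) / 2 * (1 / (1 + τ))) τ :=
    (((hasDerivAt_id τ).const_add 1).div_const 2).congr_deriv (by field_simp)
  refine ((hA.fun_pow_mul_logDeriv (p + 1)).fun_mul
    (hB.fun_pow_mul_logDeriv (p - 1))).congr_deriv ?_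
  simp only [firstSolution, firstSolutionLogDeriv]
  ring

theorem hasDerivAt_firstSolutionLogDeriv (h₁ : 1 - τ ≠ 0) (h₂ : 1 + τ ≠ 0) :
    HasDerivAt (firstSolutionLogDeriv p)
      (-((p + 1 : ℕ) : ℝ) / (1 - τ) ^ 2 - ((p - 1 : ℕ) : ℝ) / (1 + τ) ^ 2) τ := by
  refine (((hasDerivAt_const τ _).fun_div ((hasDerivAt_id τ).const_sub 1) h₁).fun_add
    ((hasDerivAt_const τ _).fun_div ((hasDerivAt_id τ).const_add 1) h₂)).congr_deriv ?_
  simp only [id_eq]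
  ring

theorem hasDerivAt_firstSolution_mul_logDeriv (h₁ : 1 - τ ≠ 0) (h₂ : 1 + τ ≠ 0) :
    HasDerivAt (fun τ => firstSolution p τ * firstSolutionLogDeriv p τ)
      (firstSolution p τ * (firstSolutionLogDeriv p τ ^ 2
        - ((p + 1 : ℕ) : ℝ) / (1 - τ) ^ 2 - ((p - 1 : ℕ) : ℝ) / (1 + τ) ^ 2)) τ :=
  ((hasDerivAt_firstSolution h₁ h₂).fun_mul
    (hasDerivAt_firstSolutionLogDeriv h₁ h₂)).congr_deriv (by ring)

theorem firstSolution_ode (hp : 1 ≤ p) (h₁ : 1 - τ ≠ 0) (h₂ : 1 + τ ≠ 0) :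
    (1 - τ ^ 2) * (firstSolution p τ * (firstSolutionLogDeriv p τ ^ 2
        - ((p + 1 : ℕ) : ℝ) / (1 - τ) ^ 2 - ((p - 1 : ℕ) : ℝ) / (1 + τ) ^ 2))
      + 2 * ((p - 1) * τ + 1) * (firstSolution p τ * firstSolutionLogDeriv p τ)
      + 2 * p * firstSolution p τ = 0 := by
  simp only [firstSolutionLogDeriv]
  push_cast [Nat.cast_sub hp]
  field_simp
  ring

theorem hasDerivAt_reductionDensity (h₁ : 1 - τ ≠ 0) (h₂ : 1 + τ ≠ 0) :
    HasDerivAt (reductionDensity p) (reductionDensity p τ * reductionDensityLogDeriv p τ) τ := by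
  have hA : HasDerivAt (fun τ : ℝ => 1 - τ) ((1 - τ) * (-1 / (1 - τ))) τ :=
    ((hasDerivAt_id τ).const_sub 1).congr_deriv (by field_simp)
  have hB : HasDerivAt (fun τ : ℝ => 1 + τ) ((1 + τ) * (1 / (1 + τ))) τ :=
    ((hasDerivAt_id τ).const_add 1).congr_deriv (by field_simp)
  have hD := (hA.fun_pow_mul_logDeriv (p + 2)).fun_mul (hB.fun_pow_mul_logDeriv p)
  unfold reductionDensity
  simp only [one_div]
  refine (hD.fun_inv (by positivity)).congr_deriv ?_
  simp only [reductionDensityLogDeriv]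
  field_simp
  ring

theorem reductionDensity_ode (hp : 1 ≤ p) (h₁ : 1 - τ ≠ 0) (h₂ : 1 + τ ≠ 0) :
    (1 - τ ^ 2) * (2 * (firstSolution p τ * firstSolutionLogDeriv p τ) * reductionDensity p τ
        + firstSolution p τ * (reductionDensity p τ * reductionDensityLogDeriv p τ))
      + 2 * ((p - 1) * τ + 1) * firstSolution p τ * reductionDensity p τ = 0 := by
  simp only [firstSolutionLogDeriv, reductionDensityLogDeriv]
  push_cast [Nat.cast_sub hp]
  field_simp
  ring

end HarmonicTransport

open HarmonicTransport in
/-- for `ℓ = p ≥ 1` the general solution of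
`(1-τ²)ζ'' + 2((p-1)τ + 1)ζ' + 2pζ = 0` on `(-1,1)` is
`ζ(τ) = ((1-τ)/2)^{p+1} ((1+τ)/2)^{p-1} (C₃ + C₄ ∫₀^τ ds/((1-s)^{p+2}(1+s)^p))`. -/
theorem stmt5 (p : ℕ) (hp : 1 ≤ p) (ζ : ℝ → ℂ)
    (hreg : ∀ τ ∈ Set.Ioo (-1 : ℝ) 1, ContDiffAt ℝ 2 ζ τ) :
    (∀ τ ∈ Set.Ioo (-1 : ℝ) 1,
      (1 - (τ : ℂ) ^ 2) * deriv (deriv ζ) τ +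
        2 * (((p : ℂ) - 1) * (τ : ℂ) + 1) * deriv ζ τ + 2 * (p : ℂ) * ζ τ = 0) ↔
    ∃ C₃ C₄ : ℂ, ∀ τ ∈ Set.Ioo (-1 : ℝ) 1,
      ζ τ = ((((1 - τ) / 2) ^ (p + 1) * ((1 + τ) / 2) ^ (p - 1) : ℝ) : ℂ) *
        (C₃ + C₄ * ((∫ s in (0 : ℝ)..τ,
          1 / ((1 - s) ^ (p + 2) * (1 + s) ^ p) : ℝ) : ℂ)) := by
  have h₁ (τ : ℝ) (hτ : τ ∈ Ioo (-1 : ℝ) 1) : 0 < 1 - τ := sub_pos.2 hτ.2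
  have h₂ (τ : ℝ) (hτ : τ ∈ Ioo (-1 : ℝ) 1) : 0 < 1 + τ := by linarith [hτ.1]
  have ha (τ : ℝ) (hτ : τ ∈ Ioo (-1 : ℝ) 1) : 1 - (τ : ℂ) ^ 2 ≠ 0 := by
    exact_mod_cast (by nlinarith [h₁ τ hτ, h₂ τ hτ] : (0 : ℝ) < 1 - τ ^ 2).ne'
  simp only [← intervalIntegral.integral_ofReal]
  exact ode_iff_exists_eq_mul_add_integral (c := fun _ => 2 * (p : ℂ))
    (y₁ := fun τ => (firstSolution p τ : ℂ)) (m := fun τ => (reductionDensity p τ : ℂ))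
    isOpen_Ioo isPreconnected_Ioo (by norm_num) ha
    (fun τ hτ => Complex.ofReal_ne_zero.2 (firstSolution_pos (h₁ τ hτ) (h₂ τ hτ)).ne')
    (fun τ hτ => Complex.ofReal_ne_zero.2 (reductionDensity_pos (h₁ τ hτ) (h₂ τ hτ)).ne')
    (fun τ hτ => (hasDerivAt_firstSolution (h₁ τ hτ).ne' (h₂ τ hτ).ne').ofReal_comp)
    (fun τ hτ =>
      (hasDerivAt_firstSolution_mul_logDeriv (h₁ τ hτ).ne' (h₂ τ hτ).ne').ofReal_comp)
    (fun τ hτ => (hasDerivAt_reductionDensity (h₁ τ hτ).ne' (h₂ τ hτ).ne').ofReal_comp)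
    (fun τ hτ => by exact_mod_cast firstSolution_ode hp (h₁ τ hτ).ne' (h₂ τ hτ).ne')
    (fun τ hτ => by exact_mod_cast reductionDensity_ode hp (h₁ τ hτ).ne' (h₂ τ hτ).ne') hreg
end
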